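/- Let a₁, a₂, …, a_k be positive integers with gcd(a₁,…,a_k) = 1 and let μ be a positive integer. Then the μ-th power sum of the nonrepresentable integers satisfies ∑_{n ∈ NR} n^μ = ∑_{κ=0}^{μ} ∑_{j=1}^{κ+1} C(μ,κ) C(κ+1,j) ((−1)^{j−1}/(κ+1)) a₁^{κ−j} B_{κ−j+1} ∑_{i=1}^{a₁−1} (m_i − i)^{j} m_i^{μ−κ}, where B_n are the Bernoulli numbers. -/

import Mathlib

/-!
If `n ≢ 0 (mod a₁)`, then `n` is representable iff `n ≥ m_{n mod a₁}`, because the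
representable numbers are closed under adding `a₁`. Hence the gaps in the residue class `i`
are `i, i + a₁, …, m_i - a₁`. Reading this progression backwards from `m_i`, its power sum is
`∑_{t=1}^{q} (m_i - t a₁)^μ` with `q a₁ = m_i - i`. Expanding binomially and applying Faulhaber's
formula to `∑_{t=1}^{q} t^κ` gives the stated expression.
-/

open Finset

theorem sum_Ico_pow_eq_sum_Icc_bernoulli (q κ : ℕ) :
    ∑ t ∈ Ico 1 (q + 1), (t : ℚ) ^ κ =
      ∑ j ∈ Icc 1 (κ + 1),
        (-1) ^ (κ + 1 - j) * bernoulli (κ + 1 - j) * (κ + 1).choose j * (q : ℚ) ^ j / (κ + 1) := by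
  rw [sum_Ico_pow]
  refine sum_nbij' (fun i => κ + 1 - i) (fun j => κ + 1 - j) ?_ ?_ ?_ ?_ ?_
  · intro i hi; simp only [mem_range, mem_Icc] at hi ⊢; omega
  · intro j hj; simp only [mem_range, mem_Icc] at hj ⊢; omega
  · intro i hi; simp only [mem_range] at hi; omega
  · intro j hj; simp only [mem_Icc] at hj; omega
  · intro i hi
    have hi : i ≤ κ + 1 := by simp only [mem_range] at hi; omega
    rw [Nat.sub_sub_self hi, Nat.choose_symm hi, bernoulli'_eq_bernoulli]

theorem sum_range_add_mul_pow_eq (i A : ℚ) (q μ : ℕ) :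
    ∑ s ∈ range q, (i + s * A) ^ μ =
      ∑ κ ∈ range (μ + 1),
        μ.choose κ * (i + q * A) ^ (μ - κ) * (-A) ^ κ * ∑ t ∈ Ico 1 (q + 1), (t : ℚ) ^ κ := by
  have hreflect : ∑ s ∈ range q, (i + s * A) ^ μ =
      ∑ t ∈ Ico 1 (q + 1), (t * -A + (i + q * A)) ^ μ := by
    refine sum_nbij' (fun s => q - s) (fun t => q - t) ?_ ?_ ?_ ?_ ?_
    · intro s hs; simp only [mem_range, mem_Ico] at hs ⊢; omega
    · intro t ht; simp only [mem_range, mem_Ico] at ht ⊢; omega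
    · intro s hs; simp only [mem_range] at hs; omega
    · intro t ht; simp only [mem_Ico] at ht; omega
    · intro s hs
      rw [Nat.cast_sub (mem_range.mp hs).le]
      ring
  rw [hreflect]
  conv_lhs => arg 2; ext t; rw [add_pow]
  rw [sum_comm]
  refine sum_congr rfl fun κ _ => ?_
  rw [mul_sum]
  refine sum_congr rfl fun t _ => ?_
  ring

theorem sum_range_add_mul_pow_eq_bernoulli {A : ℚ} (hA : A ≠ 0) (i : ℚ) (q μ : ℕ) :
    ∑ s ∈ range q, (i + s * A) ^ μ =
      ∑ κ ∈ range (μ + 1), ∑ j ∈ Icc 1 (κ + 1),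
        μ.choose κ * (κ + 1).choose j * ((-1 : ℚ) ^ (j - 1) / (κ + 1)) *
          A ^ ((κ : ℤ) - j) * bernoulli (κ + 1 - j) * ((q * A) ^ j * (i + q * A) ^ (μ - κ)) := by
  rw [sum_range_add_mul_pow_eq]
  refine sum_congr rfl fun κ _ => ?_
  rw [sum_Ico_pow_eq_sum_Icc_bernoulli, mul_sum]
  refine sum_congr rfl fun j hj => ?_
  obtain ⟨hj1, hjκ⟩ := mem_Icc.mp hj
  have hsign : (-1 : ℚ) ^ κ * (-1) ^ (κ + 1 - j) = (-1) ^ (j - 1) := by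
    rw [← pow_add, show κ + (κ + 1 - j) = (j - 1) + 2 * (κ + 1 - j) by omega, pow_add, pow_mul]
    simp
  have hApow : A ^ ((κ : ℤ) - j) * A ^ j = A ^ κ := by
    rw [← zpow_natCast, ← zpow_add₀ hA]
    simp
  rw [neg_pow, ← hsign, ← hApow]
  ring

section Apery

variable {S : Set ℕ} {A : ℕ} {m : ℕ → ℕ}

theorem add_mul_mem_of_add_mem (hS : ∀ n ∈ S, n + A ∈ S) {n : ℕ} (hn : n ∈ S) (t : ℕ) :
    n + t * A ∈ S := by
  induction t with
  | zero => simpa using hn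
  | succ t ih => simpa [add_mul, ← add_assoc] using hS _ ih

theorem mem_of_mod_eq_zero (h0 : 0 ∈ S) (hS : ∀ n ∈ S, n + A ∈ S) {n : ℕ} (hn : n % A = 0) :
    n ∈ S := by
  simpa [Nat.div_mul_cancel (Nat.dvd_of_mod_eq_zero hn)] using add_mul_mem_of_add_mem hS h0 (n / A)

variable (hA : 0 < A) (hS : ∀ n ∈ S, n + A ∈ S)
  (hm : ∀ i, 1 ≤ i → i < A → IsLeast {n | 0 < n ∧ n ∈ S ∧ n % A = i} (m i))
include hA hS hm

theorem mem_iff_apery_div_le {n : ℕ} (hn : n % A ≠ 0) : n ∈ S ↔ m (n % A) / A ≤ n / A := by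
  obtain ⟨⟨-, hmS, hmod⟩, hmin⟩ := hm (n % A) (Nat.one_le_iff_ne_zero.mpr hn) (Nat.mod_lt n hA)
  have hn' := Nat.mod_add_div n A
  have hm' := Nat.mod_add_div (m (n % A)) A
  rw [hmod] at hm'
  constructor
  · intro hnS
    have hle : m (n % A) ≤ n := hmin ⟨by omega, hnS, rfl⟩
    by_contra! hlt
    have := Nat.mul_lt_mul_of_pos_left hlt hA
    omega
  · intro hle
    have := Nat.mul_le_mul_left A hle
    have hsum := add_mul_mem_of_add_mem hS hmS (n / A - m (n % A) / A)
    rwa [show m (n % A) + (n / A - m (n % A) / A) * A = n by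
      rw [Nat.sub_mul, Nat.mul_comm _ A, Nat.mul_comm _ A]; omega] at hsum

theorem finsum_mem_gaps_eq_sum {M : Type*} [AddCommMonoid M] (h0 : 0 ∈ S) (f : ℕ → M) :
    ∑ᶠ n ∈ {n | 0 < n ∧ n ∉ S}, f n = ∑ i ∈ Ico 1 A, ∑ s ∈ range (m i / A), f (i + s * A) := by
  have hres {i s : ℕ} (hi : i < A) : (i + s * A) % A = i := by
    rw [Nat.add_mul_mod_self_right, Nat.mod_eq_of_lt hi]
  have hquot {i s : ℕ} (hi : i < A) : (i + s * A) / A = s := by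
    rw [Nat.add_mul_div_right _ _ hA, Nat.div_eq_of_lt hi, zero_add]
  have hbij : Set.BijOn (fun p : (_ : ℕ) × ℕ => p.1 + p.2 * A)
      ↑((Ico 1 A).sigma fun i => range (m i / A)) {n | 0 < n ∧ n ∉ S} := by
    refine ⟨?_, ?_, ?_⟩
    · rintro ⟨i, s⟩ hp
      simp only [coe_sigma, Set.mem_sigma_iff, coe_Ico, Set.mem_Ico, coe_range, Set.mem_Iio] at hp
      obtain ⟨⟨hi1, hiA⟩, hs⟩ := hp
      show 0 < i + s * A ∧ i + s * A ∉ S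
      refine ⟨by omega, ?_⟩
      rw [mem_iff_apery_div_le hA hS hm (by rw [hres hiA]; omega), hres hiA, hquot hiA]
      omega
    · rintro ⟨i, s⟩ hp ⟨i', s'⟩ hp' heq
      simp only [coe_sigma, Set.mem_sigma_iff, coe_Ico, Set.mem_Ico] at hp hp' heq
      have hi : i = i' := by rw [← hres (s := s) hp.1.2, heq, hres hp'.1.2]
      have hs : s = s' := by rw [← hquot (s := s) hp.1.2, heq, hquot hp'.1.2]
      subst hi hs
      rfl
    · rintro n ⟨hn0, hnS⟩
      have hmod : n % A ≠ 0 := fun h => hnS (mem_of_mod_eq_zero h0 hS h)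
      refine ⟨⟨n % A, n / A⟩, ?_, Nat.mod_add_div' n A⟩
      simp only [coe_sigma, Set.mem_sigma_iff, coe_Ico, Set.mem_Ico, coe_range, Set.mem_Iio]
      rw [mem_iff_apery_div_le hA hS hm hmod] at hnS
      exact ⟨⟨by omega, Nat.mod_lt n hA⟩, by omega⟩
  rw [← finsum_mem_eq_of_bijOn _ hbij fun _ _ => rfl, finsum_mem_coe_finset, sum_sigma]

end Apery

theorem exists_add_eq_sum_mul {ι : Type*} [Fintype ι] [DecidableEq ι] (a : ι → ℕ) (i : ι)
    {n : ℕ} (hn : ∃ x : ι → ℕ, n = ∑ j, x j * a j) : ∃ x : ι → ℕ, n + a i = ∑ j, x j * a j := by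
  obtain ⟨x, rfl⟩ := hn
  exact ⟨x + Pi.single i 1, by simp [add_mul, sum_add_distrib, Pi.single_apply]⟩

theorem power_sylvester_sum_general
    (k : ℕ) (hk : 0 < k) (a : Fin k → ℕ) (ha : ∀ i, 0 < a i)
    (μ : ℕ)
    (m : ℕ → ℕ)
    (hm : ∀ i, 1 ≤ i → i < a ⟨0, hk⟩ →
      0 < m i ∧ (∃ x : Fin k → ℕ, m i = ∑ j, x j * a j) ∧ m i % a ⟨0, hk⟩ = i ∧
        ∀ n : ℕ, 0 < n → (∃ x : Fin k → ℕ, n = ∑ j, x j * a j) → n % a ⟨0, hk⟩ = i →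
          m i ≤ n) :
    ∑ᶠ n ∈ {n : ℕ | 0 < n ∧ ¬∃ x : Fin k → ℕ, n = ∑ j, x j * a j}, (n : ℚ) ^ μ =
      ∑ κ ∈ Finset.range (μ + 1), ∑ j ∈ Finset.Icc 1 (κ + 1),
        (μ.choose κ : ℚ) * ((κ + 1).choose j : ℚ) * ((-1 : ℚ) ^ (j - 1) / (κ + 1)) *
          (a ⟨0, hk⟩ : ℚ) ^ ((κ : ℤ) - (j : ℤ)) * bernoulli (κ + 1 - j) *
          ∑ i ∈ Finset.Ico 1 (a ⟨0, hk⟩), ((m i : ℚ) - (i : ℚ)) ^ j * (m i : ℚ) ^ (μ - κ) := by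
  set A := a ⟨0, hk⟩
  have hA : 0 < A := ha _
  have hapery : ∀ i, 1 ≤ i → i < A →
      IsLeast {n | 0 < n ∧ n ∈ {n | ∃ x : Fin k → ℕ, n = ∑ j, x j * a j} ∧ n % A = i} (m i) := by
    intro i hi1 hiA
    obtain ⟨hpos, hrep, hmod, hmin⟩ := hm i hi1 hiA
    exact ⟨⟨hpos, hrep, hmod⟩, fun n ⟨hn, hnrep, hnmod⟩ => hmin n hn hnrep hnmod⟩
  refine (finsum_mem_gaps_eq_sum hA (fun _ => exists_add_eq_sum_mul a _) hapery ⟨0, by simp⟩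
    _).trans ?_
  calc ∑ i ∈ Ico 1 A, ∑ s ∈ range (m i / A), ((i + s * A : ℕ) : ℚ) ^ μ
      = ∑ i ∈ Ico 1 A, ∑ κ ∈ range (μ + 1), ∑ j ∈ Icc 1 (κ + 1),
          (μ.choose κ : ℚ) * ((κ + 1).choose j : ℚ) * ((-1 : ℚ) ^ (j - 1) / (κ + 1)) *
            (A : ℚ) ^ ((κ : ℤ) - (j : ℤ)) * bernoulli (κ + 1 - j) *
            (((m i : ℚ) - i) ^ j * (m i : ℚ) ^ (μ - κ)) := by
        refine sum_congr rfl fun i hi => ?_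
        have hmi : (m i : ℚ) = i + (m i / A : ℕ) * A := by
          have hdiv := Nat.mod_add_div' (m i) A
          rw [(hm i (mem_Ico.mp hi).1 (mem_Ico.mp hi).2).2.2.1] at hdiv
          exact_mod_cast hdiv.symm
        push_cast
        rw [hmi, add_sub_cancel_left, sum_range_add_mul_pow_eq_bernoulli (by positivity)]
    _ = _ := by
        simp_rw [mul_sum]
        rw [sum_comm]
        refine sum_congr rfl fun κ _ => ?_
        rw [sum_comm]

/-- the μ-th power sum of the nonrepresentable integers, in terms of the
Bernoulli numbers `B_n` (with `B₁ = -1/2`, i.e. Mathlib's `bernoulli`). -/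
theorem power_sylvester_sum
    (k : ℕ) (hk : 0 < k) (a : Fin k → ℕ) (ha : ∀ i, 0 < a i)
    (hgcd : Finset.univ.gcd a = 1) (μ : ℕ) (hμ : 0 < μ)
    (m : ℕ → ℕ)
    (hm : ∀ i, 1 ≤ i → i < a ⟨0, hk⟩ →
      0 < m i ∧ (∃ x : Fin k → ℕ, m i = ∑ j, x j * a j) ∧ m i % a ⟨0, hk⟩ = i ∧
        ∀ n : ℕ, 0 < n → (∃ x : Fin k → ℕ, n = ∑ j, x j * a j) → n % a ⟨0, hk⟩ = i →
          m i ≤ n) :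
    ∑ᶠ n ∈ {n : ℕ | 0 < n ∧ ¬∃ x : Fin k → ℕ, n = ∑ j, x j * a j}, (n : ℚ) ^ μ =
      ∑ κ ∈ Finset.range (μ + 1), ∑ j ∈ Finset.Icc 1 (κ + 1),
        (μ.choose κ : ℚ) * ((κ + 1).choose j : ℚ) * ((-1 : ℚ) ^ (j - 1) / (κ + 1)) *
          (a ⟨0, hk⟩ : ℚ) ^ ((κ : ℤ) - (j : ℤ)) * bernoulli (κ + 1 - j) *
          ∑ i ∈ Finset.Ico 1 (a ⟨0, hk⟩), ((m i : ℚ) - (i : ℚ)) ^ j * (m i : ℚ) ^ (μ - κ) :=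
  power_sylvester_sum_general k hk a ha μ m hm
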